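/- Let h = [[2, 0, 0], [0, 3, 1], [0, 1, 1]] (a real symmetric 3×3 matrix), let A = [[0, h], [h, 0]] ∈ M_6(ℂ) in 3×3 block form, and let I = [[0, 1₃], [1₃, 0]] where 1₃ is the 3×3 identity. Then A is Hermitian, its negative eigenvalues are exactly −2−√2, −2 and −2+√2, the sum of the eigenspaces of A for its negative eigenvalues is a 3-dimensional subspace of ℂ⁶, and this subspace is contained in the (−1)-eigenspace of I. (In the notation of the paper, n₋(1,1) = 3 for the deformed Hamiltonian H₁.) -/

import Mathlib

/-!
On odd vectors `(x, -x)` the block Hamiltonian `[[0, h], [h, 0]]` acts as `-h`, and an eigenvector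
`(x, y)` for `μ` has `h (x + y) = μ (x + y)`. Since `h = h₁(1,1)` is positive definite, with
eigenvalues `2, 2 ± √2`, a negative `μ` forces `y = -x`: the negative eigenvalues of `A` are
`-2, -2 ∓ √2`, and, `h` being diagonalizable, their eigenvectors fill the whole odd sector
`{(x, -x)} ≅ ℂ³`, which lies in the `(-1)`-eigenspace of `I`.
-/

open Complex Matrix

/-- The set of negative (real) eigenvalues of a `6×6` complex matrix. -/
def negEigenvalues (A : Matrix (Fin 3 ⊕ Fin 3) (Fin 3 ⊕ Fin 3) ℂ) : Set ℂ :=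
  {μ : ℂ | μ ∈ spectrum ℂ A ∧ ∃ x : ℝ, (x : ℂ) = μ ∧ x < 0}

/-- The sum of the eigenspaces of `A` for its negative eigenvalues, as a subspace of `ℂ⁶`. -/
noncomputable def negSpace (A : Matrix (Fin 3 ⊕ Fin 3) (Fin 3 ⊕ Fin 3) ℂ) :
    Submodule ℂ ((Fin 3 ⊕ Fin 3) → ℂ) :=
  ⨆ μ ∈ negEigenvalues A, Module.End.eigenspace (Matrix.toLin' A) μ

/-- The inversion symmetry operator `I = [[0, 1₃], [1₃, 0]]`. -/
noncomputable def inversionOp : Matrix (Fin 3 ⊕ Fin 3) (Fin 3 ⊕ Fin 3) ℂ :=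
  Matrix.fromBlocks 0 1 1 0

/-- The off-diagonal block `h₁(1,1)` of the deformed Hamiltonian at the fixed point `(1,1)`. -/
noncomputable def hOneOne : Matrix (Fin 3) (Fin 3) ℂ := !![2, 0, 0; 0, 3, 1; 0, 1, 1]

/-- The deformed Hamiltonian `H₁(1,1)` in block form. -/
noncomputable def AOneOne : Matrix (Fin 3 ⊕ Fin 3) (Fin 3 ⊕ Fin 3) ℂ :=
  Matrix.fromBlocks 0 hOneOne hOneOne 0

open Module.End
open scoped ComplexOrder Pointwise

section BlockAntidiagonal

variable {K n : Type*} [CommRing K]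

def oddEmbedding : (n → K) →ₗ[K] (n ⊕ n → K) where
  toFun x := Sum.elim x (-x)
  map_add' x y := by ext (i | i) <;> simp [add_comm]
  map_smul' c x := by ext (i | i) <;> simp

theorem oddEmbedding_apply (x : n → K) : oddEmbedding x = Sum.elim x (-x) := rfl

theorem oddEmbedding_injective : Function.Injective (oddEmbedding : (n → K) →ₗ[K] _) :=
  fun x y hxy => by simpa [oddEmbedding_apply] using congrArg (· ∘ Sum.inl) hxy

variable [Fintype n]

theorem fromBlocks_zero_mulVec_sumElim (h : Matrix n n K) (x y : n → K) :
    fromBlocks 0 h h 0 *ᵥ Sum.elim x y = Sum.elim (h *ᵥ y) (h *ᵥ x) := by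
  simp [fromBlocks_mulVec]

theorem fromBlocks_zero_mulVec_oddEmbedding (h : Matrix n n K) (x : n → K) :
    fromBlocks 0 h h 0 *ᵥ oddEmbedding x = -oddEmbedding (h *ᵥ x) := by
  rw [oddEmbedding_apply, oddEmbedding_apply, fromBlocks_zero_mulVec_sumElim, mulVec_neg,
    ← Sum.elim_neg_neg, neg_neg]

variable [DecidableEq n]

theorem range_oddEmbedding_le_eigenspace_swap :
    LinearMap.range oddEmbedding ≤
      eigenspace (toLin' (fromBlocks 0 1 1 0 : Matrix (n ⊕ n) (n ⊕ n) K)) (-1) := by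
  rintro _ ⟨x, rfl⟩
  rw [mem_eigenspace_iff, toLin'_apply, fromBlocks_zero_mulVec_oddEmbedding, one_mulVec,
    neg_one_smul]

theorem map_oddEmbedding_eigenspace_le (h : Matrix n n K) (μ : K) :
    (eigenspace (toLin' h) μ).map oddEmbedding ≤
      eigenspace (toLin' (fromBlocks 0 h h 0)) (-μ) := by
  rintro _ ⟨x, hx, rfl⟩
  rw [SetLike.mem_coe, mem_eigenspace_iff, toLin'_apply] at hx
  rw [mem_eigenspace_iff, toLin'_apply, fromBlocks_zero_mulVec_oddEmbedding, hx, map_smul,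
    neg_smul]

theorem eigenspace_fromBlocks_le_map_oddEmbedding {h : Matrix n n K} {μ : K}
    (hμ : eigenspace (toLin' h) μ = ⊥) :
    eigenspace (toLin' (fromBlocks 0 h h 0)) μ ≤
      (eigenspace (toLin' h) (-μ)).map oddEmbedding := by
  intro v hv
  obtain ⟨x, y, rfl⟩ : ∃ x y, v = Sum.elim x y := ⟨_, _, (Sum.elim_comp_inl_inr v).symm⟩
  rw [mem_eigenspace_iff, toLin'_apply, fromBlocks_zero_mulVec_sumElim] at hv
  have hy : h *ᵥ y = μ • x := funext fun i => by simpa using congrFun hv (Sum.inl i)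
  have hx : h *ᵥ x = μ • y := funext fun i => by simpa using congrFun hv (Sum.inr i)
  have hsum : x + y = 0 := by
    rw [← Submodule.mem_bot K, ← hμ, mem_eigenspace_iff, toLin'_apply, mulVec_add, hx, hy,
      smul_add, add_comm]
  obtain rfl : y = -x := eq_neg_of_add_eq_zero_right hsum
  refine ⟨x, ?_, rfl⟩
  rw [SetLike.mem_coe, mem_eigenspace_iff, toLin'_apply, hx, smul_neg, neg_smul]

theorem hasEigenvalue_fromBlocks_neg {h : Matrix n n K} {μ : K}
    (hμ : HasEigenvalue (toLin' h) μ) :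
    HasEigenvalue (toLin' (fromBlocks 0 h h 0)) (-μ) := by
  rw [hasEigenvalue_iff] at hμ ⊢
  refine ne_bot_of_le_ne_bot ?_ (map_oddEmbedding_eigenspace_le h μ)
  rwa [Ne, ← Submodule.map_bot oddEmbedding,
    (Submodule.map_injective_of_injective oddEmbedding_injective).eq_iff]

theorem hasEigenvalue_neg_of_hasEigenvalue_fromBlocks {h : Matrix n n K} {μ : K}
    (hμ : ¬HasEigenvalue (toLin' h) μ) (hA : HasEigenvalue (toLin' (fromBlocks 0 h h 0)) μ) :
    HasEigenvalue (toLin' h) (-μ) := by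
  rw [hasEigenvalue_iff, not_not] at hμ
  rw [hasEigenvalue_iff] at hA ⊢
  intro hbot
  exact hA (eq_bot_iff.2 <| (eigenspace_fromBlocks_le_map_oddEmbedding hμ).trans <| by
    rw [hbot, Submodule.map_bot])

end BlockAntidiagonal

theorem Matrix.hasEigenvalue_toLin'_iff {K n : Type*} [Field K] [Fintype n] [DecidableEq n]
    {A : Matrix n n K} {μ : K} : HasEigenvalue (toLin' A) μ ↔ μ ∈ spectrum K A := by
  rw [hasEigenvalue_iff_mem_spectrum, spectrum_toLin']

theorem Matrix.IsHermitian.iSup_eigenspace_toLin'_eq_top {𝕜 n : Type*} [RCLike 𝕜] [Fintype n]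
    [DecidableEq n] {A : Matrix n n 𝕜} (hA : A.IsHermitian) :
    ⨆ μ, eigenspace (toLin' A) μ = ⊤ := by
  let b := hA.eigenvectorBasis.toBasis.map (WithLp.linearEquiv 2 𝕜 (n → 𝕜))
  rw [eq_top_iff, ← b.span_eq, Submodule.span_le]
  rintro _ ⟨j, rfl⟩
  exact Submodule.mem_iSup_of_mem (hA.eigenvalues j : 𝕜)
    (mem_eigenspace_iff.2 (by simpa [b] using hA.mulVec_eigenvectorBasis j))

theorem Matrix.PosDef.pos_of_mem_spectrum {n : Type*} [Fintype n] [DecidableEq n]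
    {h : Matrix n n ℂ} (hh : h.PosDef) {μ : ℂ} (hμ : μ ∈ spectrum ℂ h) : 0 < μ := by
  obtain ⟨_, ⟨i, rfl⟩, rfl⟩ := hh.isHermitian.spectrum_eq_image_range ▸ hμ
  exact RCLike.ofReal_pos.2 (hh.eigenvalues_pos i)

theorem mem_negEigenvalues_iff {A : Matrix (Fin 3 ⊕ Fin 3) (Fin 3 ⊕ Fin 3) ℂ} {μ : ℂ} :
    μ ∈ negEigenvalues A ↔ HasEigenvalue (toLin' A) μ ∧ μ < 0 := by
  rw [negEigenvalues, Set.mem_ofPred_eq, hasEigenvalue_toLin'_iff]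
  refine and_congr_right fun _ => ⟨?_, fun hμ => ⟨μ.re, ?_, neg_iff.1 hμ |>.1⟩⟩
  · rintro ⟨x, rfl, hx⟩
    exact_mod_cast hx
  · exact Complex.ext rfl (neg_iff.1 hμ).2.symm

section PosDefBlock

variable {h : Matrix (Fin 3) (Fin 3) ℂ}

theorem Matrix.PosDef.negEigenvalues_fromBlocks (hh : h.PosDef) :
    negEigenvalues (fromBlocks 0 h h 0) = -spectrum ℂ h := by
  ext μ
  rw [mem_negEigenvalues_iff, Set.mem_neg, ← hasEigenvalue_toLin'_iff]
  constructor
  · rintro ⟨hA, hneg⟩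
    refine hasEigenvalue_neg_of_hasEigenvalue_fromBlocks (fun hμ => ?_) hA
    exact lt_asymm hneg (hh.pos_of_mem_spectrum (hasEigenvalue_toLin'_iff.1 hμ))
  · intro hμ
    exact ⟨by simpa using hasEigenvalue_fromBlocks_neg hμ,
      neg_pos.1 (hh.pos_of_mem_spectrum (hasEigenvalue_toLin'_iff.1 hμ))⟩

theorem Matrix.PosDef.negSpace_fromBlocks (hh : h.PosDef) :
    negSpace (fromBlocks 0 h h 0) = LinearMap.range oddEmbedding := by
  apply le_antisymm
  · refine iSup₂_le fun μ hμ => ?_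
    have hμ' : eigenspace (toLin' h) μ = ⊥ := by
      rw [← not_ne_iff, ← hasEigenvalue_iff, hasEigenvalue_toLin'_iff]
      exact fun hμh => lt_asymm (mem_negEigenvalues_iff.1 hμ).2 (hh.pos_of_mem_spectrum hμh)
    exact (eigenspace_fromBlocks_le_map_oddEmbedding hμ').trans LinearMap.map_le_range
  · rw [LinearMap.range_eq_map, ← hh.isHermitian.iSup_eigenspace_toLin'_eq_top,
      Submodule.map_iSup]
    refine iSup_le fun ev => ?_
    by_cases hev : HasEigenvalue (toLin' h) ev
    · refine (map_oddEmbedding_eigenspace_le h ev).trans (le_iSup₂_of_le (-ev) ?_ le_rfl)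
      rw [hh.negEigenvalues_fromBlocks, Set.mem_neg, neg_neg, ← hasEigenvalue_toLin'_iff]
      exact hev
    · rw [hasEigenvalue_iff, not_not] at hev
      rw [hev, Submodule.map_bot]
      exact bot_le

end PosDefBlock

theorem spectrum_hOneOne :
    spectrum ℂ hOneOne = {2 + (Real.sqrt 2 : ℂ), 2, 2 - (Real.sqrt 2 : ℂ)} := by
  have hs : (Real.sqrt 2 : ℂ) ^ 2 = 2 := by
    rw [← ofReal_pow, Real.sq_sqrt zero_le_two]; norm_num
  have det_eq (μ : ℂ) : (algebraMap ℂ _ μ - hOneOne).det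
      = (μ - (2 + Real.sqrt 2)) * (μ - 2) * (μ - (2 - Real.sqrt 2)) := by
    rw [det_fin_three]
    simp only [algebraMap_eq_diagonal, hOneOne, Fin.isValue, Matrix.sub_apply, diagonal_apply_eq,
      Pi.algebraMap_apply, Algebra.algebraMap_self, RingHom.id_apply, of_apply, cons_val',
      cons_val_zero, cons_val_fin_one, cons_val_one, cons_val, ne_eq, Fin.reduceEq,
      not_false_eq_true, diagonal_apply_ne, zero_sub, mul_neg, mul_one, neg_sub, zero_ne_one,
      sub_self, one_ne_zero, mul_zero, zero_mul, sub_zero, neg_zero, add_zero]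
    linear_combination (μ - 2) * hs
  ext μ
  rw [spectrum.mem_iff, isUnit_iff_isUnit_det, isUnit_iff_ne_zero, not_not, det_eq]
  simp [sub_eq_zero, or_assoc]

/-- `hOneOne = Bᴴ B`: its quadratic form is `2|x₀|² + 2|x₁|² + |x₁ + x₂|²`. -/
def hOneOneFactor : Matrix (Fin 5) (Fin 3) ℂ := !![1, 0, 0; 1, 0, 0; 0, 1, 0; 0, 1, 0; 0, 1, 1]

theorem hOneOne_posDef : hOneOne.PosDef := by
  have hfactor : hOneOne = hOneOneFactorᴴ * hOneOneFactor := by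
    ext i j
    fin_cases i <;> fin_cases j <;>
      simp [hOneOne, hOneOneFactor, Matrix.mul_apply, Fin.sum_univ_five] <;> norm_num
  rw [hfactor]
  refine PosDef.conjTranspose_mul_self _ fun x y hxy => ?_
  have h0 := congrFun hxy 0
  have h2 := congrFun hxy 2
  have h4 := congrFun hxy 4
  simp only [mulVec, dotProduct, hOneOneFactor, Fin.isValue, of_apply, cons_val',
    cons_val_fin_one, cons_val_zero, Fin.sum_univ_three, one_mul, cons_val_one, zero_mul, add_zero,
    cons_val, zero_add] at h0 h2 h4
  ext i
  fin_cases i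
  exacts [h0, h2, show x 2 = y 2 by linear_combination h4 - h2]

/-- `n₋(1,1) = 3`: `A = H₁(1,1)` is Hermitian, its negative eigenvalues are exactly
`−2−√2, −2, −2+√2`, the sum of the corresponding eigenspaces is 3-dimensional, and it is
contained in the `(−1)`-eigenspace of the inversion operator. -/
theorem nMinus_at_one_one :
    AOneOne.IsHermitian ∧
    negEigenvalues AOneOne =
      {(-2 - (Real.sqrt 2 : ℂ)), -2, -2 + (Real.sqrt 2 : ℂ)} ∧
    Module.finrank ℂ ↥(negSpace AOneOne) = 3 ∧
    negSpace AOneOne ≤ Module.End.eigenspace (Matrix.toLin' inversionOp) (-1) := by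
  refine ⟨isHermitian_zero.fromBlocks hOneOne_posDef.isHermitian isHermitian_zero, ?_, ?_, ?_⟩
  · rw [AOneOne, hOneOne_posDef.negEigenvalues_fromBlocks, spectrum_hOneOne,
      Set.neg_insert, Set.neg_insert, Set.neg_singleton, neg_add', neg_sub,
      add_comm (-2 : ℂ), ← sub_eq_add_neg]
  · rw [AOneOne, hOneOne_posDef.negSpace_fromBlocks,
      LinearMap.finrank_range_of_inj oddEmbedding_injective, Module.finrank_fin_fun]
  · rw [AOneOne, hOneOne_posDef.negSpace_fromBlocks]
    exact range_oddEmbedding_le_eigenspace_swap
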